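/- Assume the lattice is minimal and elliptic and that Z_K ∉ L. Let s ∈ S' be such that Z_K − s ∈ L and s ≤ t for every t ∈ S' with Z_K − t ∈ L (s is the minimal antinef representative of the class of Z_K), and set l := Z_K − s. Then l ≥ 0 and: (a) χ(s) = 0 and χ(l) = 0; (b) (l, s) = 0, and (E_v, s) = 0 for every v in the support |l|; (c) (E_v, l) = (E_v,E_v) + 2 for every v ∈ |l| (so l is the canonical cycle of the subgraph supported on B_0 := |l|), and B_0 ≠ V. -/

import Mathlib

open scoped BigOperators

/-- A negative definite lattice on the free ℤ-module with basis indexed by `V`,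
realized inside the ℚ-vector space `V → ℚ`.  The basis vector `E_v` is `Pi.single v 1`,
the symmetric bilinear form `B` takes integer values on basis vectors, is negative
definite, and has nonnegative off-diagonal entries. -/
structure LatticeData (V : Type*) [Fintype V] [DecidableEq V] where
  B : (V → ℚ) →ₗ[ℚ] (V → ℚ) →ₗ[ℚ] ℚ
  symm : ∀ x y, B x y = B y x
  int_basis : ∀ u v : V, ∃ n : ℤ, B (Pi.single u 1) (Pi.single v 1) = (n : ℚ)
  negdef : ∀ x : V → ℚ, x ≠ 0 → B x x < 0
  offdiag : ∀ u v : V, u ≠ v → (0 : ℚ) ≤ B (Pi.single u 1) (Pi.single v 1)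

variable {V : Type*} [Fintype V] [DecidableEq V]

/-- The basis vector `E_v`. -/
def Ev (v : V) : V → ℚ := Pi.single v 1

/-- `x` lies in the lattice `L` (has integral coefficients). -/
def inL (x : V → ℚ) : Prop := ∀ v, ∃ n : ℤ, x v = (n : ℚ)

/-- The support `|x|` of a cycle. -/
def supp (x : V → ℚ) : Set V := {v | x v ≠ 0}

/-- `x ∈ L'`, the dual lattice: all pairings with basis vectors are integers. -/
def inLd (D : LatticeData V) (x : V → ℚ) : Prop := ∀ v, ∃ n : ℤ, D.B x (Ev v) = (n : ℚ)

/-- `x ∈ S'`: the antinef cone of the dual lattice. -/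
def inS' (D : LatticeData V) (x : V → ℚ) : Prop := inLd D x ∧ ∀ v, D.B x (Ev v) ≤ 0

/-- The Riemann–Roch expression `χ(x) = -(x, x - Z_K)/2`. -/
def chi (D : LatticeData V) (ZK x : V → ℚ) : ℚ := -(D.B x (x - ZK)) / 2

/-- `ZK` is the (anti)canonical cycle: `(Z_K, E_v) = (E_v,E_v) + 2` for all `v`. -/
def IsCanonical (D : LatticeData V) (ZK : V → ℚ) : Prop :=
  ∀ v, D.B ZK (Ev v) = D.B (Ev v) (Ev v) + 2

/-- The lattice is minimal: all self-intersections are at most `-2`. -/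
def IsMinimal (D : LatticeData V) : Prop := ∀ v : V, D.B (Ev v) (Ev v) ≤ -2

/-- The lattice is elliptic: `χ(l) ≥ 0` for all `l ∈ L`, `l > 0`, with value 0 attained. -/
def Elliptic (D : LatticeData V) (ZK : V → ℚ) : Prop :=
  (∀ l : V → ℚ, inL l → 0 ≤ l → l ≠ 0 → 0 ≤ chi D ZK l) ∧
  (∃ l : V → ℚ, inL l ∧ 0 ≤ l ∧ l ≠ 0 ∧ chi D ZK l = 0)

/-- The dual graph: `u ≠ v` are adjacent iff `(E_u, E_v) > 0`. -/
def dualGraph (D : LatticeData V) : SimpleGraph V where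
  Adj u v := u ≠ v ∧ 0 < D.B (Ev u) (Ev v)
  symm := by
    refine ⟨fun u v h => ?_⟩
    exact ⟨h.1.symm, by rw [D.symm]; exact h.2⟩
  loopless := by
    refine ⟨fun u h => ?_⟩
    exact h.1 rfl

theorem test_preamble : True := trivial

/-!
Minimality makes `Z_K` itself antinef, so `s ≤ Z_K` and `l = Z_K - s ≥ 0`.
Both `χ(s)` and `χ(l)` equal `(l, s)/2`, which is `≤ 0` because `l ≥ 0` and `s` is antinef, and `≥ 0` by ellipticity
(or trivially if `l = 0`); hence `(l, s) = 0`, and since it is a sum of nonpositive terms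
`l_v (E_v, s)`, each `(E_v, s)` with `v ∈ |l|` vanishes. If `|l|` were all of `V`, `s` would be
orthogonal to every `E_v`, hence `0` by definiteness, and `Z_K = l ∈ L`.
-/

namespace LatticeData

variable (D : LatticeData V)

theorem B_eq_sum (x y : V → ℚ) : D.B x y = ∑ v, y v * D.B x (Ev v) := by
  have hy : y = ∑ v, y v • Ev v := by
    funext j
    simp [Ev, Pi.single_apply, Finset.sum_apply]
  conv_lhs => rw [hy]
  simp [map_sum, map_smul, smul_eq_mul]

theorem B_nonpos_of_nonneg {s l : V → ℚ} (hs : ∀ v, D.B s (Ev v) ≤ 0) (hl : 0 ≤ l) :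
    D.B s l ≤ 0 := by
  rw [B_eq_sum]
  exact Finset.sum_nonpos fun v _ => mul_nonpos_of_nonneg_of_nonpos (hl v) (hs v)

theorem B_Ev_eq_zero_of_mem_supp {s l : V → ℚ} (hs : ∀ v, D.B s (Ev v) ≤ 0) (hl : 0 ≤ l)
    (hsl : D.B s l = 0) {v : V} (hv : v ∈ supp l) : D.B s (Ev v) = 0 := by
  rw [B_eq_sum] at hsl
  have hterm := (Finset.sum_eq_zero_iff_of_nonpos fun v _ =>
    mul_nonpos_of_nonneg_of_nonpos (hl v) (hs v)).mp hsl v (Finset.mem_univ v)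
  exact (mul_eq_zero.mp hterm).resolve_left hv

theorem eq_zero_of_B_Ev_eq_zero {s : V → ℚ} (hs : ∀ v, D.B s (Ev v) = 0) : s = 0 := by
  by_contra hne
  have hss : D.B s s = 0 := by
    rw [B_eq_sum]
    exact Finset.sum_eq_zero fun v _ => by rw [hs v, mul_zero]
  exact (D.negdef s hne).ne hss

end LatticeData

theorem chi_eq_half_B_sub (D : LatticeData V) (ZK x : V → ℚ) :
    chi D ZK x = D.B x (ZK - x) / 2 := by
  rw [chi, ← neg_sub, map_neg]
  ring

theorem IsCanonical.inS' {D : LatticeData V} {ZK : V → ℚ} (hZK : IsCanonical D ZK)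
    (hmin : IsMinimal D) : inS' D ZK := by
  refine ⟨fun v => ?_, fun v => by linarith [hZK v, hmin v]⟩
  obtain ⟨n, hn⟩ := D.int_basis v v
  exact ⟨n + 2, by rw [hZK v, Ev, hn]; push_cast; ring⟩

theorem statement0_general {V : Type*} [Fintype V] [DecidableEq V]
    (D : LatticeData V) (ZK : V → ℚ) (hZK : IsCanonical D ZK)
    (hmin : IsMinimal D) (hell : Elliptic D ZK)
    (hnotL : ¬ inL ZK)
    (s : V → ℚ) (hsS : inS' D s) (hsL : inL (ZK - s))
    (hsmin : ∀ t : V → ℚ, inS' D t → inL (ZK - t) → s ≤ t) :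
    0 ≤ ZK - s ∧
    chi D ZK s = 0 ∧
    chi D ZK (ZK - s) = 0 ∧
    D.B (ZK - s) s = 0 ∧
    (∀ v ∈ supp (ZK - s), D.B (Ev v) s = 0) ∧
    (∀ v ∈ supp (ZK - s), D.B (Ev v) (ZK - s) = D.B (Ev v) (Ev v) + 2) ∧
    supp (ZK - s) ≠ Set.univ := by
  have hl : 0 ≤ ZK - s := sub_nonneg.mpr (hsmin ZK (hZK.inS' hmin) fun v => ⟨0, by simp⟩)
  have hls : D.B s (ZK - s) = 0 := by
    refine le_antisymm (D.B_nonpos_of_nonneg hsS.2 hl) ?_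
    by_cases h0 : ZK - s = 0
    · rw [h0, map_zero]
    · have := hell.1 (ZK - s) hsL hl h0
      rw [chi_eq_half_B_sub, sub_sub_cancel, D.symm] at this
      linarith
  have hEv : ∀ v ∈ supp (ZK - s), D.B (Ev v) s = 0 := fun v hv => by
    rw [D.symm]; exact D.B_Ev_eq_zero_of_mem_supp hsS.2 hl hls hv
  refine ⟨hl, by rw [chi_eq_half_B_sub, hls, zero_div],
    by rw [chi_eq_half_B_sub, sub_sub_cancel, D.symm, hls, zero_div], by rw [D.symm, hls], hEv,
    fun v hv => by rw [map_sub, hEv v hv, D.symm, hZK v, sub_zero], ?_⟩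
  intro huniv
  have hs0 : s = 0 := D.eq_zero_of_B_Ev_eq_zero fun v => by
    rw [D.symm]; exact hEv v (huniv ▸ Set.mem_univ v)
  exact hnotL (by simpa [hs0] using hsL)

/-- for a minimal elliptic lattice with `Z_K ∉ L`, if `s` is the minimal
antinef representative of the class of `Z_K` and `l = Z_K - s`, then `l ≥ 0`,
`χ(s) = χ(l) = 0`, `(l, s) = 0`, `(E_v, s) = 0` on `|l|`, `l` is the canonical cycle
of the subgraph supported on `B_0 = |l|`, and `B_0 ≠ V`. -/
theorem statement0 {V : Type*} [Fintype V] [DecidableEq V] [Nonempty V]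
    (D : LatticeData V) (ZK : V → ℚ) (hZK : IsCanonical D ZK)
    (hmin : IsMinimal D) (hell : Elliptic D ZK)
    (hnotL : ¬ inL ZK)
    (s : V → ℚ) (hsS : inS' D s) (hsL : inL (ZK - s))
    (hsmin : ∀ t : V → ℚ, inS' D t → inL (ZK - t) → s ≤ t) :
    0 ≤ ZK - s ∧
    chi D ZK s = 0 ∧
    chi D ZK (ZK - s) = 0 ∧
    D.B (ZK - s) s = 0 ∧
    (∀ v ∈ supp (ZK - s), D.B (Ev v) s = 0) ∧
    (∀ v ∈ supp (ZK - s), D.B (Ev v) (ZK - s) = D.B (Ev v) (Ev v) + 2) ∧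
    supp (ZK - s) ≠ Set.univ :=
  statement0_general D ZK hZK hmin hell hnotL s hsS hsL hsmin
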